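/- Let U⁺ be the quotient of the free superalgebra F by the radical R of the bilinear form of Proposition 1.1. If x ∈ U⁺ is homogeneous of nonzero weight ν and ϱ_{i,l}(x) = 0 for all (i,l) ∈ I^∞, then x = 0. -/

import Mathlib

open scoped BigOperators

noncomputable section

/-- The base field `ℚ(q)`. -/
abbrev K : Type := RatFunc ℚ

/-- The indeterminate `q`. -/
def qq : K := RatFunc.X

/-- Words in the generators `a_{il}`, `(i,l) ∈ I^∞ = I × ℤ_{>0}`. -/
abbrev Word (I : Type) := FreeMonoid (I × ℕ+)

/-- The parity of a word: the sum of the parities `l·p(i)` of its letters. -/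
def wP {I : Type} (p : I → ℕ) (w : Word I) : ℕ :=
  ((FreeMonoid.toList w).map fun a => (a.2 : ℕ) * p a.1).sum

/-- The pairing `(|w|, |w'|)` of the weights of two words, where the letter
`(i,l)` has weight `l·α_i` and `(α_i, α_j) = B i j`. -/
def wB {I : Type} (B : I → I → ℤ) (w w' : Word I) : ℤ :=
  ((FreeMonoid.toList w).map fun a =>
    (((FreeMonoid.toList w').map fun b => (a.2 : ℤ) * (b.2 : ℤ) * B a.1 b.1)).sum).sum

/-- The weight of a word in the root lattice `Q = ⊕ ℤα_i`. -/
def wWt {I : Type} (w : Word I) : I →₀ ℤ :=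
  ((FreeMonoid.toList w).map fun a => Finsupp.single a.1 (a.2 : ℤ)).sum

/-- The free associative `ℚ(q)`-superalgebra `F` on the generators `a_{il}`. -/
abbrev F (I : Type) := MonoidAlgebra K (Word I)

/-- The underlying vector space of `F ⊗ F`, with basis the pairs of words. -/
abbrev M (I : Type) := (Word I × Word I) →₀ K

/-- The basis element of `F` corresponding to a word. -/
def toF {I : Type} (w : Word I) : F I := MonoidAlgebra.single w 1

/-- The generator `a_{il}` of `F`. -/
def gen {I : Type} (i : I) (l : ℕ+) : F I := toF (FreeMonoid.of (i, l))

/-- The twisted multiplication on `F ⊗ F`: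
`(x₁⊗x₂)(x₃⊗x₄) = (-1)^{p(x₂)p(x₃)} q^{(|x₂|,|x₃|)} x₁x₃ ⊗ x₂x₄`. -/
def twmul {I : Type} (p : I → ℕ) (B : I → I → ℤ) (f g : M I) : M I :=
  f.sum fun a ca => g.sum fun b cb =>
    Finsupp.single (a.1 * b.1, a.2 * b.2)
      (ca * cb * (-1 : K) ^ (wP p a.2 * wP p b.1) * qq ^ (wB B a.2 b.1))

/-- Word reversal. -/
def wrev {I : Type} (w : Word I) : Word I :=
  FreeMonoid.ofList (FreeMonoid.toList w).reverse

/-- The anti-automorphism `σ` of `F` fixing each generator `a_{il}`: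
it reverses every word. -/
def sigmaF {I : Type} : F I → F I := fun x => MonoidAlgebra.ofCoeff (Finsupp.mapDomain wrev x.coeff)

/-!
The key identity is the adjunction `(z, y·a_{il}) = (a_{il}, a_{il}) (ϱ_{i,l}(z), y)`. On words
`z` it follows by induction on the length from the Hopf-pairing property of `(·,·)`, the
primitivity and orthogonality of the generators, and the twisted Leibniz rule for `ϱ_{i,l}`; it
then holds for all `z` by linearity. Every word other than `1` ends with some `a_{il}`, so the
adjunction makes `x` orthogonal to all such words; and `(x, 1)` is the constant term of `x`, which
vanishes because `x` is homogeneous of nonzero weight.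
-/

namespace FreeMonoid

theorem inductionOn_mul_of {α : Type*} {motive : FreeMonoid α → Prop} (w : FreeMonoid α)
    (one : motive 1) (mul_of : ∀ w a, motive w → motive (w * of a)) : motive w :=
  List.reverseRecOn (motive := fun l => motive (ofList l)) (toList w) one
    fun l a ih => by simpa only [ofList_append, ofList_singleton] using mul_of _ a ih

end FreeMonoid

section

variable {I : Type}

lemma toF_one : toF (1 : Word I) = 1 := rfl

lemma toF_mul (u v : Word I) : toF (u * v) = toF u * toF v := by
  simp [toF, MonoidAlgebra.single_mul_single]

lemma toF_of (i : I) (l : ℕ+) : toF (FreeMonoid.of (i, l)) = gen i l := rfl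

lemma linearMap_ext_toF {N : Type*} [AddCommMonoid N] [Module K N] {f g : F I →ₗ[K] N}
    (h : ∀ w, f (toF w) = g (toF w)) : f = g :=
  MonoidAlgebra.lhom_ext' fun w => LinearMap.ext_ring (h w)

def twist (p : I → ℕ) (B : I → I → ℤ) (u v : Word I) : K :=
  (-1 : K) ^ (wP p u * wP p v) * qq ^ wB B u v

variable {p : I → ℕ} {B : I → I → ℤ}

lemma twist_of_left (i : I) (l : ℕ+) (w : Word I) :
    twist p B (FreeMonoid.of (i, l)) w =
      (-1 : K) ^ ((l : ℕ) * p i * wP p w) * qq ^ wB B (FreeMonoid.of (i, l)) w := by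
  simp [twist, wP]

lemma twist_of_comm (hB : ∀ i j, B i j = B j i) (a b : I × ℕ+) :
    twist p B (FreeMonoid.of a) (FreeMonoid.of b) =
      twist p B (FreeMonoid.of b) (FreeMonoid.of a) := by
  simp only [twist, wP, wB, FreeMonoid.toList_of, List.map_cons, List.map_nil, List.sum_cons,
    List.sum_nil, add_zero, hB a.1, mul_comm]

lemma twmul_primitive_right (f : M I) (i : I) (l : ℕ+) :
    twmul p B f (Finsupp.single (FreeMonoid.of (i, l), 1) 1 +
        Finsupp.single (1, FreeMonoid.of (i, l)) 1) =
      f.sum fun a c => Finsupp.single (a.1 * FreeMonoid.of (i, l), a.2)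
          (c * twist p B a.2 (FreeMonoid.of (i, l))) +
        Finsupp.single (a.1, a.2 * FreeMonoid.of (i, l)) c := by
  unfold twmul
  refine Finsupp.sum_congr fun a _ => ?_
  rw [Finsupp.sum_add_index' (fun _ => by simp)
      (fun _ _ _ => by rw [← Finsupp.single_add]; ring_nf),
    Finsupp.sum_single_index (by simp), Finsupp.sum_single_index (by simp),
    show wP p 1 = 0 from rfl, show wB B a.2 1 = 0 by simp [wB]]
  simp only [twist, mul_one, mul_zero, pow_zero, zpow_zero, mul_assoc]

/-- Proposition 1.1: `Bf` is a Hopf pairing for the twisted coproduct `rho`, for which the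
generators are primitive and pairwise orthogonal. -/
structure IsHopfPairing (p : I → ℕ) (B : I → I → ℤ) (rho : F I →ₗ[K] M I)
    (Bf : F I →ₗ[K] F I →ₗ[K] K) : Prop where
  rho_one : rho 1 = Finsupp.single (1, 1) 1
  rho_mul : ∀ x y : F I, rho (x * y) = twmul p B (rho x) (rho y)
  rho_gen : ∀ (i : I) (l : ℕ+),
    rho (gen i l) = Finsupp.single (FreeMonoid.of (i, l), 1) 1
      + Finsupp.single (1, FreeMonoid.of (i, l)) 1
  pair_one_one : Bf 1 1 = 1
  pair_mul_right : ∀ x y y' : F I,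
    Bf x (y * y') = (rho x).sum fun ab c => c * Bf (toF ab.1) y * Bf (toF ab.2) y'
  pair_mul_left : ∀ x x' y : F I,
    Bf (x * x') y = (rho y).sum fun ab c => c * Bf x (toF ab.1) * Bf x' (toF ab.2)
  pair_gen_gen_of_ne : ∀ (i : I) (l : ℕ+) (j : I) (k : ℕ+),
    (i, l) ≠ (j, k) → Bf (gen i l) (gen j k) = 0

namespace IsHopfPairing

variable {rho : F I →ₗ[K] M I} {Bf : F I →ₗ[K] F I →ₗ[K] K}
  (h : IsHopfPairing p B rho Bf)
include h

lemma pair_gen_one (i : I) (l : ℕ+) : Bf (gen i l) 1 = 0 := by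
  have key := h.pair_mul_right (gen i l) 1 1
  rw [mul_one, h.rho_gen, Finsupp.sum_add_index' (fun _ => by simp) (fun _ _ _ => by ring),
    Finsupp.sum_single_index (by simp), Finsupp.sum_single_index (by simp)] at key
  simpa [toF_of, toF_one, h.pair_one_one] using key

lemma pair_one_gen (i : I) (l : ℕ+) : Bf 1 (gen i l) = 0 := by
  have key := h.pair_mul_left 1 1 (gen i l)
  rw [mul_one, h.rho_gen, Finsupp.sum_add_index' (fun _ => by simp) (fun _ _ _ => by ring),
    Finsupp.sum_single_index (by simp), Finsupp.sum_single_index (by simp)] at key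
  simpa [toF_of, toF_one, h.pair_one_one] using key

lemma pair_one_toF_of_ne_one {u : Word I} (hu : u ≠ 1) : Bf 1 (toF u) = 0 := by
  induction u using FreeMonoid.inductionOn_mul_of with
  | one => exact absurd rfl hu
  | mul_of w a _ =>
    obtain ⟨i, l⟩ := a
    rw [toF_mul, h.pair_mul_right, h.rho_one, Finsupp.sum_single_index (by simp)]
    simp [toF_one, toF_of, h.pair_one_gen]

lemma pair_toF_one_of_ne_one {u : Word I} (hu : u ≠ 1) : Bf (toF u) 1 = 0 := by
  induction u using FreeMonoid.inductionOn_mul_of with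
  | one => exact absurd rfl hu
  | mul_of w a _ =>
    obtain ⟨i, l⟩ := a
    rw [toF_mul, h.pair_mul_left, h.rho_one, Finsupp.sum_single_index (by simp)]
    simp [toF_one, toF_of, h.pair_gen_one]

lemma pair_one_right (z : F I) : Bf z 1 = z.coeff 1 := by
  classical
  induction z using MonoidAlgebra.induction_linear with
  | zero => simp
  | add z z' hz hz' => simp [hz, hz']
  | single w c =>
    rw [show MonoidAlgebra.single w c = c • toF w by simp [toF], map_smul, LinearMap.smul_apply]
    by_cases hw : w = 1
    · simp [hw, toF_one, h.pair_one_one]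
    · rw [h.pair_toF_one_of_ne_one hw]
      simp [toF, Ne.symm hw]

lemma pair_gen_toF_mul_gen (j : I) (k : ℕ+) (u : Word I) (i : I) (l : ℕ+) :
    Bf (gen j k) (toF u * gen i l) = Bf 1 (toF u) * Bf (gen j k) (gen i l) := by
  rw [h.pair_mul_right, h.rho_gen,
    Finsupp.sum_add_index' (fun _ => by simp) (fun _ _ _ => by ring),
    Finsupp.sum_single_index (by simp), Finsupp.sum_single_index (by simp)]
  simp [toF_one, toF_of, h.pair_one_gen]

lemma pair_gen_toF_of_ne (j : I) (k : ℕ+) {u : Word I} (hu : u ≠ FreeMonoid.of (j, k)) :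
    Bf (gen j k) (toF u) = 0 := by
  induction u using FreeMonoid.inductionOn_mul_of with
  | one => exact h.pair_gen_one j k
  | mul_of w a _ =>
    obtain ⟨i, l⟩ := a
    rw [toF_mul, toF_of, h.pair_gen_toF_mul_gen]
    by_cases hw : w = 1
    · subst hw
      rw [toF_one, h.pair_one_one, one_mul,
        h.pair_gen_gen_of_ne _ _ _ _ fun hji => hu (by rw [one_mul, hji])]
    · rw [h.pair_one_toF_of_ne_one hw, zero_mul]

lemma twist_mul_pair_gen_toF (u v : Word I) (j : I) (k : ℕ+) :
    twist p B u v * Bf (gen j k) (toF u) =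
      twist p B (FreeMonoid.of (j, k)) v * Bf (gen j k) (toF u) := by
  by_cases hu : u = FreeMonoid.of (j, k)
  · rw [hu]
  · rw [h.pair_gen_toF_of_ne j k hu, mul_zero, mul_zero]

lemma pair_mul_gen_mul_gen (X y : F I) (j : I) (k : ℕ+) (i : I) (l : ℕ+) :
    Bf (X * gen j k) (y * gen i l) =
      twist p B (FreeMonoid.of (j, k)) (FreeMonoid.of (i, l)) *
          (rho y).sum (fun b c => c * Bf X (toF b.1 * gen i l) * Bf (gen j k) (toF b.2)) +
        Bf X y * Bf (gen j k) (gen i l) := by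
  have hX : Bf X y = (rho y).sum fun b c => c * Bf X (toF b.1) * Bf 1 (toF b.2) := by
    simpa using h.pair_mul_left X 1 y
  rw [hX, h.pair_mul_left, h.rho_mul, h.rho_gen, twmul_primitive_right,
    Finsupp.sum_sum_index (fun _ => by simp) (fun _ _ _ => by ring),
    Finsupp.mul_sum, Finsupp.sum_mul, ← Finsupp.sum_add]
  refine Finsupp.sum_congr fun b _ => ?_
  rw [Finsupp.sum_add_index' (fun _ => by simp) (fun _ _ _ => by ring),
    Finsupp.sum_single_index (by simp), Finsupp.sum_single_index (by simp)]
  rw [toF_mul, toF_mul, toF_of, h.pair_gen_toF_mul_gen]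
  dsimp only
  linear_combination rho y b * Bf X (toF b.1 * gen i l) *
    h.twist_mul_pair_gen_toF b.2 (FreeMonoid.of (i, l)) j k

section Adjunction

variable [DecidableEq I] (hB : ∀ i j, B i j = B j i) {rlow : I → ℕ+ → (F I →ₗ[K] F I)}
  (hl1 : ∀ i l, rlow i l 1 = 0)
  (hlgen : ∀ (i : I) (l : ℕ+) (j : I) (k : ℕ+),
    rlow i l (gen j k) = if i = j ∧ k = l then 1 else 0)
  (hlLeib : ∀ (i : I) (l : ℕ+) (w w' : Word I),
    rlow i l (toF w * toF w') = toF w * rlow i l (toF w') +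
      ((-1 : K) ^ (((l : ℕ) * p i) * wP p w') *
        qq ^ (wB B (FreeMonoid.of (i, l)) w')) • (rlow i l (toF w) * toF w'))
include hB hl1 hlgen hlLeib

lemma pair_toF_mul_gen (w : Word I) (y : F I) (i : I) (l : ℕ+) :
    Bf (toF w) (y * gen i l) = Bf (gen i l) (gen i l) * Bf (rlow i l (toF w)) y := by
  induction w using FreeMonoid.inductionOn_mul_of generalizing y with
  | one =>
    rw [toF_one, hl1, h.pair_mul_right, h.rho_one, Finsupp.sum_single_index (by simp)]
    simp [toF_one, h.pair_one_gen]
  | mul_of w a ih =>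
    obtain ⟨j, k⟩ := a
    have hsum : (rho y).sum (fun b c => c * Bf (toF w) (toF b.1 * gen i l) *
        Bf (gen j k) (toF b.2)) = Bf (gen i l) (gen i l) * Bf (rlow i l (toF w) * gen j k) y := by
      rw [h.pair_mul_left, Finsupp.mul_sum]
      refine Finsupp.sum_congr fun b _ => ?_
      rw [ih]
      ring
    rw [toF_mul, hlLeib, ← twist_of_left, toF_of, hlgen, h.pair_mul_gen_mul_gen, hsum, map_add,
      LinearMap.add_apply, map_smul, LinearMap.smul_apply, smul_eq_mul, twist_of_comm hB]
    split_ifs with hjk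
    · obtain ⟨rfl, rfl⟩ := hjk
      rw [mul_one]
      ring
    · rw [h.pair_gen_gen_of_ne j k i l fun hji => hjk ⟨(Prod.ext_iff.mp hji).1.symm,
        (Prod.ext_iff.mp hji).2⟩]
      simp only [mul_zero, map_zero, LinearMap.zero_apply]
      ring

lemma pair_mul_gen (z y : F I) (i : I) (l : ℕ+) :
    Bf z (y * gen i l) = Bf (gen i l) (gen i l) * Bf (rlow i l z) y :=
  LinearMap.congr_fun (linearMap_ext_toF (f := Bf.flip (y * gen i l))
    (g := Bf (gen i l) (gen i l) • (Bf.flip y).comp (rlow i l))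
    fun w => h.pair_toF_mul_gen hB hl1 hlgen hlLeib w y i l) z

end Adjunction

end IsHopfPairing

end

/-- If `x ∈ U⁺ = F/R` is homogeneous of nonzero weight `ν` and `ϱ_{i,l}(x) = 0`
in `U⁺` for all `(i,l) ∈ I^∞`, then `x = 0` in `U⁺`.  Here `R` is the radical of
Lusztig's bilinear form, so membership in `R` is expressed as pairing to zero
with every element of `F`. -/
theorem homogeneous_in_radical {I : Type} [DecidableEq I]
    (p : I → ℕ) (d : I → ℕ+) (B : I → I → ℤ) (hB : ∀ i j, B i j = B j i)
    (rho : F I →ₗ[K] M I)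
    (hrho1 : rho 1 = Finsupp.single (1, 1) 1)
    (hrhomul : ∀ x y : F I, rho (x * y) = twmul p B (rho x) (rho y))
    (hrhogen : ∀ (i : I) (l : ℕ+),
      rho (gen i l) = Finsupp.single (FreeMonoid.of (i, l), 1) 1
        + Finsupp.single (1, FreeMonoid.of (i, l)) 1)
    (Bf : F I →ₗ[K] F I →ₗ[K] K)
    (h11 : Bf 1 1 = 1)
    (hgenB : ∀ (i : I) (l : ℕ+) (j : I) (k : ℕ+),
      Bf (gen i l) (gen j k) =
        if i = j ∧ l = k then
          (1 - (-1 : K) ^ ((l : ℕ) * p i) * qq ^ (2 * (l : ℕ) * (d i : ℕ)))⁻¹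
        else 0)
    (hR : ∀ x y y' : F I,
      Bf x (y * y') = (rho x).sum fun ab c => c * Bf (toF ab.1) y * Bf (toF ab.2) y')
    (hL : ∀ x x' y : F I,
      Bf (x * x') y = (rho y).sum fun ab c => c * Bf x (toF ab.1) * Bf x' (toF ab.2))
    (rlow : I → ℕ+ → (F I →ₗ[K] F I))
    (hl1 : ∀ i l, rlow i l 1 = 0)
    (hlgen : ∀ (i : I) (l : ℕ+) (j : I) (k : ℕ+),
      rlow i l (gen j k) = if i = j ∧ k = l then 1 else 0)
    (hlLeib : ∀ (i : I) (l : ℕ+) (w w' : Word I),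
      rlow i l (toF w * toF w') = toF w * rlow i l (toF w') +
        ((-1 : K) ^ (((l : ℕ) * p i) * wP p w') *
          qq ^ (wB B (FreeMonoid.of (i, l)) w')) • (rlow i l (toF w) * toF w'))
    (ν : I →₀ ℤ) (hν : ν ≠ 0) (x : F I)
    (hhom : ∀ w ∈ (show Word I →₀ K from x.coeff).support, wWt w = ν)
    (hd : ∀ (i : I) (l : ℕ+) (y : F I), Bf (rlow i l x) y = 0) :
    ∀ y : F I, Bf x y = 0 := by
  have hBf : IsHopfPairing p B rho Bf := ⟨hrho1, hrhomul, hrhogen, h11, hR, hL,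
    fun i l j k hne => by rw [hgenB, if_neg fun hij => hne (by rw [hij.1, hij.2])]⟩
  have hx : Bf x = 0 := linearMap_ext_toF fun w => by
    induction w using FreeMonoid.inductionOn_mul_of with
    | one =>
      have hwt1 : wWt (1 : Word I) = 0 := rfl
      have hx1 : x.coeff 1 = 0 :=
        Finsupp.notMem_support_iff.mp fun h1 => hν ((hhom 1 h1).symm.trans hwt1)
      rw [toF_one, hBf.pair_one_right, hx1, LinearMap.zero_apply]
    | mul_of w a _ =>
      obtain ⟨i, l⟩ := a
      rw [toF_mul, toF_of, hBf.pair_mul_gen hB hl1 hlgen hlLeib, hd, mul_zero,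
        LinearMap.zero_apply]
  exact fun y => LinearMap.congr_fun hx y
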